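/- Let u : ℝ² → ℝᵐ be a C² solution of the characteristic system ∂²u/∂s∂t = F(∂u/∂s, ∂u/∂t, u, s, t), where F is Lipschitz in its first three arguments and satisfies F(0, 0, c, s, t) = 0 for every constant vector c. If u is constant (equal to c₀) on the two characteristic lines {s = 0} and {t = 0} within the quadrant s, t ≥ 0, then u ≡ c₀ on the whole quadrant {s ≥ 0, t ≥ 0}. -/

import Mathlib

/-!
Write `v = ∂ₜu` and `w = ∂ₛu`. Then `∂ₛv = ∂ₜw = F(w, v, u, s, t)`, whose norm is at most
`L (‖w‖ + ‖v‖)` because `F` vanishes at `(0, 0, c)`, while `v`, `w` and `u - c₀` vanish on the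
axes where they start. On a rectangle `[0, S] × [0, T]` let `M` be the maximum of
`e^{-K(s+t)} (‖w‖ + ‖v‖ + ‖u - c₀‖)`. Integrating `v`, `w` and `u - c₀` away from the axes
gives `‖w‖ + ‖v‖ + ‖u - c₀‖ ≤ (2L + 1) M e^{K(s+t)} / K`, hence `M ≤ (2L + 1) M / K`, and
`K = 2L + 2` forces `M = 0`.
-/

open Set Real

theorem norm_le_of_lipschitzWith_of_map_zero {E₁ E₂ E₃ G : Type*} [SeminormedAddCommGroup E₁]
    [SeminormedAddCommGroup E₂] [SeminormedAddCommGroup E₃] [SeminormedAddCommGroup G]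
    {f : E₁ × E₂ × E₃ → G} {L : NNReal} (hf : LipschitzWith L f) (h0 : ∀ c, f (0, 0, c) = 0)
    (a : E₁) (b : E₂) (c : E₃) : ‖f (a, b, c)‖ ≤ L * (‖a‖ + ‖b‖) := by
  have h := hf.dist_le_mul (a, b, c) (0, 0, c)
  rw [h0, dist_zero_right, Prod.dist_eq, Prod.dist_eq, dist_self] at h
  refine h.trans (mul_le_mul_of_nonneg_left ?_ L.coe_nonneg)
  simp only [dist_zero_right]
  exact max_le (by simp) (max_le (by simp) (by positivity))

section

variable {E : Type*} [NormedAddCommGroup E] [NormedSpace ℝ E]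

theorem HasDerivAt.eq_zero_of_forall_Ici_eq {g : ℝ → E} {g' c : E} {a t : ℝ}
    (hg : HasDerivAt g g' t) (ht : a ≤ t) (hc : ∀ x, a ≤ x → g x = c) : g' = 0 :=
  (uniqueDiffOn_Ici a t ht).eq_deriv _ hg.hasDerivWithinAt
    ((hasDerivWithinAt_const t _ c).congr (fun x hx => hc x hx) (hc t ht))

theorem DifferentiableAt.hasDerivAt_comp_prodMk_left {f : ℝ × ℝ → E} {s t : ℝ}
    (hf : DifferentiableAt ℝ f (s, t)) :
    HasDerivAt (fun σ => f (σ, t)) (fderiv ℝ f (s, t) (1, 0)) s :=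
  hf.hasFDerivAt.comp_hasDerivAt s ((hasDerivAt_id s).prodMk (hasDerivAt_const s t))

theorem DifferentiableAt.hasDerivAt_comp_prodMk_right {f : ℝ × ℝ → E} {s t : ℝ}
    (hf : DifferentiableAt ℝ f (s, t)) :
    HasDerivAt (fun τ => f (s, τ)) (fderiv ℝ f (s, t) (0, 1)) t :=
  hf.hasFDerivAt.comp_hasDerivAt t ((hasDerivAt_const t s).prodMk (hasDerivAt_id t))

theorem ContDiffAt.fderiv_fderiv_apply_comm {V : Type*} [NormedAddCommGroup V] [NormedSpace ℝ V]
    {f : V → E} {p : V} (hf : ContDiffAt ℝ 2 f p) (a b : V) :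
    fderiv ℝ (fun q => fderiv ℝ f q a) p b = fderiv ℝ (fun q => fderiv ℝ f q b) p a := by
  have hdf : DifferentiableAt ℝ (fderiv ℝ f) p :=
    (hf.fderiv_right (m := 1) le_rfl).differentiableAt one_ne_zero
  rw [fderiv_clm_apply hdf (differentiableAt_const a),
    fderiv_clm_apply hdf (differentiableAt_const b)]
  simpa using hf.isSymmSndFDerivAt (by simp [minSmoothness_of_isRCLikeNormedField]) b a

theorem norm_le_exp_div_of_norm_deriv_le {f f' : ℝ → E} {C K x : ℝ} (hK : 0 < K) (hC : 0 ≤ C)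
    (hx : 0 ≤ x) (hf : ∀ σ ∈ Icc 0 x, HasDerivAt f (f' σ) σ) (hf0 : f 0 = 0)
    (bound : ∀ σ ∈ Ico 0 x, ‖f' σ‖ ≤ C * exp (K * σ)) : ‖f x‖ ≤ C * exp (K * x) / K := by
  have hB : ∀ σ, HasDerivAt (fun σ => C * exp (K * σ) / K) (C * exp (K * σ)) σ := by
    intro σ
    refine ((((hasDerivAt_id σ).const_mul K).exp.const_mul C).div_const K).congr_deriv ?_
    simp only [id, mul_one]
    field_simp
  refine image_norm_le_of_norm_deriv_right_le_deriv_boundary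
    (fun σ hσ => (hf σ hσ).continuousAt.continuousWithinAt)
    (fun σ hσ => (hf σ (Ico_subset_Icc_self hσ)).hasDerivWithinAt)
    (by rw [hf0, norm_zero]; positivity) hB bound ⟨hx, le_rfl⟩

structure HomogeneousGoursatProblem (u v w D : ℝ × ℝ → E) (c₀ : E) (L : ℝ) : Prop where
  nonneg : 0 ≤ L
  continuous_u : Continuous u
  continuous_v : Continuous v
  continuous_w : Continuous w
  hasDerivAt_u_snd : ∀ s t, HasDerivAt (fun τ => u (s, τ)) (v (s, t)) t
  hasDerivAt_v_fst : ∀ s t, HasDerivAt (fun σ => v (σ, t)) (D (s, t)) s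
  hasDerivAt_w_snd : ∀ s t, HasDerivAt (fun τ => w (s, τ)) (D (s, t)) t
  norm_le : ∀ q, 0 ≤ q → ‖D q‖ ≤ L * (‖w q‖ + ‖v q‖)
  u_fst_axis : ∀ s, 0 ≤ s → u (s, 0) = c₀
  v_snd_axis : ∀ t, 0 ≤ t → v (0, t) = 0
  w_fst_axis : ∀ s, 0 ≤ s → w (s, 0) = 0

namespace HomogeneousGoursatProblem

variable {u v w D : ℝ × ℝ → E} {c₀ : E} {L : ℝ}

theorem improve_exp_bound (h : HomogeneousGoursatProblem u v w D c₀ L) {K M : ℝ} (hK : 0 < K)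
    (hM : 0 ≤ M) {p : ℝ × ℝ}
    (hbound : ∀ q ∈ Icc 0 p, ‖w q‖ + ‖v q‖ + ‖u q - c₀‖ ≤ M * exp (K * (q.1 + q.2)))
    {q : ℝ × ℝ} (hq : q ∈ Icc 0 p) :
    ‖w q‖ + ‖v q‖ + ‖u q - c₀‖ ≤ (2 * L + 1) / K * (M * exp (K * (q.1 + q.2))) := by
  obtain ⟨s, t⟩ := q
  obtain ⟨⟨hs, ht⟩, hsp, htp⟩ := hq
  have hL := h.nonneg
  have hexp : ∀ a b, exp (K * (a + b)) = exp (K * a) * exp (K * b) := by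
    intro a b; rw [mul_add, exp_add]
  have hleft : ∀ σ ∈ Ico 0 s, (σ, t) ∈ Icc 0 p := fun σ hσ =>
    ⟨⟨hσ.1, ht⟩, hσ.2.le.trans hsp, htp⟩
  have hright : ∀ τ ∈ Ico 0 t, (s, τ) ∈ Icc 0 p := fun τ hτ =>
    ⟨⟨hs, hτ.1⟩, hsp, hτ.2.le.trans htp⟩
  have hD : ∀ r ∈ Icc 0 p, ‖D r‖ ≤ L * M * exp (K * (r.1 + r.2)) := by
    intro r hr
    have := hbound r hr
    calc ‖D r‖ ≤ L * (‖w r‖ + ‖v r‖) := h.norm_le r hr.1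
      _ ≤ L * (M * exp (K * (r.1 + r.2))) := by
        gcongr
        linarith [norm_nonneg (u r - c₀)]
      _ = L * M * exp (K * (r.1 + r.2)) := by ring
  have hv : ‖v (s, t)‖ ≤ L * M * exp (K * t) * exp (K * s) / K :=
    norm_le_exp_div_of_norm_deriv_le hK (by positivity) hs
      (fun σ _ => h.hasDerivAt_v_fst σ t) (h.v_snd_axis t ht) fun σ hσ => by
        have := hD _ (hleft σ hσ); rw [hexp] at this; linarith
  have hw : ‖w (s, t)‖ ≤ L * M * exp (K * s) * exp (K * t) / K :=
    norm_le_exp_div_of_norm_deriv_le (f := fun τ => w (s, τ)) hK (by positivity) ht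
      (fun τ _ => h.hasDerivAt_w_snd s τ) (h.w_fst_axis s hs) fun τ hτ => by
        have := hD _ (hright τ hτ); rw [hexp] at this; linarith
  have hu : ‖u (s, t) - c₀‖ ≤ M * exp (K * s) * exp (K * t) / K :=
    norm_le_exp_div_of_norm_deriv_le (f := fun τ => u (s, τ) - c₀) hK (by positivity) ht
      (fun τ _ => (h.hasDerivAt_u_snd s τ).sub_const c₀) (sub_eq_zero.2 (h.u_fst_axis s hs))
      fun τ hτ => by
        have := hbound _ (hright τ hτ); rw [hexp] at this
        linarith [norm_nonneg (w (s, τ)), norm_nonneg (u (s, τ) - c₀)]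
  rw [hexp]
  calc _ ≤ L * M * exp (K * s) * exp (K * t) / K + L * M * exp (K * t) * exp (K * s) / K
        + M * exp (K * s) * exp (K * t) / K := by gcongr
    _ = _ := by ring

theorem eq_of_nonneg (h : HomogeneousGoursatProblem u v w D c₀ L) {p : ℝ × ℝ} (hp : 0 ≤ p) :
    u p = c₀ := by
  set K := 2 * L + 2
  have hK : 0 < K := by linarith [h.nonneg]
  set Φ : ℝ × ℝ → ℝ := fun q => ‖w q‖ + ‖v q‖ + ‖u q - c₀‖
  have hΦ : Continuous Φ := by
    have := h.continuous_u; have := h.continuous_v; have := h.continuous_w; fun_prop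
  obtain ⟨p₀, hp₀, hmax⟩ := isCompact_Icc.exists_isMaxOn (nonempty_Icc.2 hp)
    (by fun_prop : Continuous fun q : ℝ × ℝ => exp (-(K * (q.1 + q.2))) * Φ q).continuousOn
  set M := exp (-(K * (p₀.1 + p₀.2))) * Φ p₀
  have hbound : ∀ q ∈ Icc 0 p, Φ q ≤ M * exp (K * (q.1 + q.2)) := by
    intro q hq
    have hq' : exp (-(K * (q.1 + q.2))) * Φ q ≤ M := hmax hq
    rwa [exp_neg, inv_mul_le_iff₀ (exp_pos _), mul_comm] at hq'
  have hΦp₀ : Φ p₀ ≤ 0 := by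
    have hMp₀ : M * exp (K * (p₀.1 + p₀.2)) = Φ p₀ := by
      rw [mul_right_comm, ← exp_add, neg_add_cancel, exp_zero, one_mul]
    have := h.improve_exp_bound hK (by positivity) hbound hp₀
    rw [hMp₀, div_mul_eq_mul_div, le_div_iff₀ hK] at this
    linarith
  have hM : M ≤ 0 := mul_nonpos_of_nonneg_of_nonpos (exp_pos _).le hΦp₀
  have hΦp : Φ p ≤ 0 :=
    (hbound p ⟨hp, le_rfl⟩).trans (mul_nonpos_of_nonpos_of_nonneg hM (exp_pos _).le)
  rw [← sub_eq_zero, ← norm_le_zero_iff]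
  linarith [norm_nonneg (w p), norm_nonneg (v p)]

end HomogeneousGoursatProblem

end

theorem stmt_11_general (E : Type*) [NormedAddCommGroup E] [NormedSpace ℝ E]
    (F : E → E → E → ℝ → ℝ → E) (c₀ : E)
    (L : NNReal)
    (hFlip : ∀ s t : ℝ, LipschitzWith L fun q : E × E × E => F q.1 q.2.1 q.2.2 s t)
    (hF0 : ∀ (c : E) (s t : ℝ), F 0 0 c s t = 0)
    (u : ℝ × ℝ → E) (hu : ContDiff ℝ 2 u)
    (heq : ∀ p : ℝ × ℝ, 0 ≤ p.1 → 0 ≤ p.2 →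
      fderiv ℝ (fun q => fderiv ℝ u q (0, 1)) p (1, 0) =
        F (fderiv ℝ u p (1, 0)) (fderiv ℝ u p (0, 1)) (u p) p.1 p.2)
    (hbdry1 : ∀ s : ℝ, 0 ≤ s → u (s, 0) = c₀)
    (hbdry2 : ∀ t : ℝ, 0 ≤ t → u (0, t) = c₀) :
    ∀ p : ℝ × ℝ, 0 ≤ p.1 → 0 ≤ p.2 → u p = c₀ := by
  have hu1 : Differentiable ℝ u := hu.differentiable two_ne_zero
  have hu' : ContDiff ℝ 1 (fderiv ℝ u) := hu.fderiv_right le_rfl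
  set v : ℝ × ℝ → E := fun p => fderiv ℝ u p (0, 1)
  set w : ℝ × ℝ → E := fun p => fderiv ℝ u p (1, 0)
  have hv : ContDiff ℝ 1 v := hu'.clm_apply contDiff_const
  have hw : ContDiff ℝ 1 w := hu'.clm_apply contDiff_const
  have hsys : HomogeneousGoursatProblem u v w (fun p => fderiv ℝ v p (1, 0)) c₀ L :=
    { nonneg := L.coe_nonneg
      continuous_u := hu.continuous
      continuous_v := hv.continuous
      continuous_w := hw.continuous
      hasDerivAt_u_snd := fun _ _ => (hu1 _).hasDerivAt_comp_prodMk_right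
      hasDerivAt_v_fst := fun _ _ => (hv.differentiable one_ne_zero _).hasDerivAt_comp_prodMk_left
      hasDerivAt_w_snd := fun _ _ => by
        rw [← hu.contDiffAt.fderiv_fderiv_apply_comm]
        exact (hw.differentiable one_ne_zero _).hasDerivAt_comp_prodMk_right
      norm_le := fun q hq => by
        rw [heq q hq.1 hq.2]
        exact norm_le_of_lipschitzWith_of_map_zero (hFlip _ _) (hF0 · _ _) _ _ _
      u_fst_axis := hbdry1
      v_snd_axis := fun _ ht =>
        (hu1 _).hasDerivAt_comp_prodMk_right.eq_zero_of_forall_Ici_eq ht hbdry2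
      w_fst_axis := fun _ hs =>
        (hu1 _).hasDerivAt_comp_prodMk_left.eq_zero_of_forall_Ici_eq hs hbdry1 }
  exact fun p hs ht => hsys.eq_of_nonneg ⟨hs, ht⟩

theorem stmt_11 (m : ℕ) (E : Type*) [NormedAddCommGroup E] [NormedSpace ℝ E]
    (F : E → E → E → ℝ → ℝ → E) (c₀ : E)
    (hFcont : Continuous fun q : E × E × E × ℝ × ℝ => F q.1 q.2.1 q.2.2.1 q.2.2.2.1 q.2.2.2.2)
    (L : NNReal)
    (hFlip : ∀ s t : ℝ, LipschitzWith L fun q : E × E × E => F q.1 q.2.1 q.2.2 s t)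
    (hF0 : ∀ (c : E) (s t : ℝ), F 0 0 c s t = 0)
    (u : ℝ × ℝ → E) (hu : ContDiff ℝ 2 u)
    (heq : ∀ p : ℝ × ℝ, 0 ≤ p.1 → 0 ≤ p.2 →
      fderiv ℝ (fun q => fderiv ℝ u q (0, 1)) p (1, 0) =
        F (fderiv ℝ u p (1, 0)) (fderiv ℝ u p (0, 1)) (u p) p.1 p.2)
    (hbdry1 : ∀ s : ℝ, 0 ≤ s → u (s, 0) = c₀)
    (hbdry2 : ∀ t : ℝ, 0 ≤ t → u (0, t) = c₀) :
    ∀ p : ℝ × ℝ, 0 ≤ p.1 → 0 ≤ p.2 → u p = c₀ :=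
  stmt_11_general E F c₀ L hFlip hF0 u hu heq hbdry1 hbdry2
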